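/- arXiv:2004.02012 — 3 statements merged into one kernel-verified Lean document; each statement's English description precedes it below -/
import Mathlib

section
/- If a DFA A has the suffix language containment property and there is a path in the product graph P_{G,A} from (x, s₀) through (v, s₁) and later (v, s₂) to (u, s_f) with s_f ∈ F, where (v, s₁) precedes (v, s₂) on the path, then there exists a word in the suffix language [s₁] equal to the label of the suffix of the path from (v, s₂) to (u, s_f); consequently δ*(s₁, w) ∈ F for that suffix label w. -/
/-- Extended transition function of a DFA. -/
def dstar {S A : Type*} (δ : S → A → S) (s : S) (w : List A) : S :=
  w.foldl δ s

/-- The suffix language `[s]` of a state `s`. -/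
def suffixLang {S A : Type*} (δ : S → A → S) (F : Set S) (s : S) : Set (List A) :=
  { w | dstar δ s w ∈ F }

/-- State `t` is reachable from state `s` in the automaton by reading some word. -/
def stateReach {S A : Type*} (δ : S → A → S) (s t : S) : Prop :=
  ∃ w : List A, dstar δ s w = t

/-- The suffix language containment property: for each pair of states `(s, t)`
lying on a path from `s₀` to some final state where `t` is a successor of `s`,
`[s] ⊇ [t]`. -/
def ContainmentProperty {S A : Type*} (δ : S → A → S) (s₀ : S) (F : Set S) : Prop :=
  ∀ s t : S, stateReach δ s₀ s → stateReach δ s t →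
    (∃ w : List A, dstar δ t w ∈ F) →
    suffixLang δ F s ⊇ suffixLang δ F t

/-- A path in the product graph `P_{G,A}` with its label. -/
inductive PPath {V S A : Type*} (E : V → V → Prop) (φ : V → V → A)
    (δ : S → A → S) : V × S → V × S → List A → Prop
  | nil (p : V × S) : PPath E φ δ p p []
  | cons {u v : V} {s t : S} {q : V × S} {w : List A} :
      E u v → t = δ s (φ u v) → PPath E φ δ (v, t) q w →
      PPath E φ δ (u, s) q (φ u v :: w)

namespace PPath

variable {V S A : Type*} {E : V → V → Prop} {φ : V → V → A} {δ : S → A → S}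
  {p q : V × S} {w : List A}

theorem dstar_eq (h : PPath E φ δ p q w) : dstar δ p.2 w = q.2 := by
  induction h with
  | nil => rfl
  | cons _ ht _ ih => subst ht; exact ih

theorem stateReach (h : PPath E φ δ p q w) : stateReach δ p.2 q.2 :=
  ⟨w, h.dstar_eq⟩

theorem mem_suffixLang {F : Set S} (h : PPath E φ δ p q w) (hq : q.2 ∈ F) :
    w ∈ suffixLang δ F p.2 :=
  show dstar δ p.2 w ∈ F from h.dstar_eq ▸ hq

end PPath

/-- If `A` has the suffix language containment property and the product graph
has a path from `(x, s₀)` through `(v, s₁)` and later `(v, s₂)` to `(u, s_f)`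
with `s_f ∈ F`, then the label `w₃` of the suffix of the path from `(v, s₂)` to
`(u, s_f)` lies in `[s₁]`; consequently `δ*(s₁, w₃) ∈ F`. -/
theorem containment_suffix_in_earlier_state {V S A : Type*}
    (E : V → V → Prop) (φ : V → V → A) (δ : S → A → S) (s₀ : S) (F : Set S)
    (hcont : ContainmentProperty δ s₀ F)
    (x v u : V) (s₁ s₂ sf : S) (w₁ w₂ w₃ : List A)
    (h₁ : PPath E φ δ (x, s₀) (v, s₁) w₁)
    (h₂ : PPath E φ δ (v, s₁) (v, s₂) w₂)
    (h₃ : PPath E φ δ (v, s₂) (u, sf) w₃)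
    (hf : sf ∈ F) :
    w₃ ∈ suffixLang δ F s₁ ∧ dstar δ s₁ w₃ ∈ F := by
  have hw₃ : w₃ ∈ suffixLang δ F s₂ := h₃.mem_suffixLang hf
  have hmem : w₃ ∈ suffixLang δ F s₁ :=
    hcont s₁ s₂ h₁.stateReach h₂.stateReach ⟨w₃, hw₃⟩ hw₃
  exact ⟨hmem, hmem⟩
end

section
/- Let A be a DFA with the suffix language containment property and G an edge-labeled directed graph. If there exists any path p from x to u in G with φ(p) ∈ L(A), then there exists a simple path (no repeated vertices) from x to u in G whose label is in L(A). -/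
/-- `PathVia E φ x y w vs`: a path in `G` from `x` to `y` with label `w`
visiting exactly the vertex sequence `vs`. -/
inductive PathVia {V A : Type*} (E : V → V → Prop) (φ : V → V → A) :
    V → V → List A → List V → Prop
  | nil (x : V) : PathVia E φ x x [] [x]
  | cons {x y z : V} {w : List A} {vs : List V} :
      E x y → PathVia E φ y z w vs → PathVia E φ x z (φ x y :: w) (x :: vs)

theorem List.Duplicate.exists_eq_append_cons_append_cons {α : Type*} {a : α} {l : List α}
    (h : List.Duplicate a l) : ∃ l₁ l₂ l₃, l = l₁ ++ a :: l₂ ++ a :: l₃ := by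
  induction h with
  | cons_mem hm =>
    obtain ⟨l₂, l₃, rfl⟩ := List.append_of_mem hm
    exact ⟨[], l₂, l₃, rfl⟩
  | @cons_duplicate b _ _ ih =>
    obtain ⟨l₁, l₂, l₃, rfl⟩ := ih
    exact ⟨b :: l₁, l₂, l₃, rfl⟩

section Automaton

variable {S A : Type*} {δ : S → A → S} {s₀ : S} {F : Set S}

theorem dstar_append (s : S) (w₁ w₂ : List A) :
    dstar δ s (w₁ ++ w₂) = dstar δ (dstar δ s w₁) w₂ :=
  List.foldl_append

theorem ContainmentProperty.mem_of_append_append_mem (hcont : ContainmentProperty δ s₀ F)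
    {w₁ c w₂ : List A} (h : dstar δ s₀ (w₁ ++ c ++ w₂) ∈ F) : dstar δ s₀ (w₁ ++ w₂) ∈ F := by
  rw [dstar_append, dstar_append] at h
  rw [dstar_append]
  exact hcont _ _ ⟨w₁, rfl⟩ ⟨c, rfl⟩ ⟨w₂, h⟩ h

end Automaton

namespace PathVia

variable {V A : Type*} {E : V → V → Prop} {φ : V → V → A}

theorem head_eq {x z v : V} {w : List A} {vs : List V} (h : PathVia E φ x z w (v :: vs)) :
    x = v := by
  cases h <;> rfl

theorem append {x y z : V} {w₁ w₂ : List A} {vs₁ vs₂ : List V}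
    (h₁ : PathVia E φ x y w₁ vs₁) (h₂ : PathVia E φ y z w₂ (y :: vs₂)) :
    PathVia E φ x z (w₁ ++ w₂) (vs₁ ++ vs₂) := by
  induction h₁ with
  | nil => exact h₂
  | cons he _ ih => exact .cons he (ih h₂)

theorem split {x z v : V} {w : List A} {vs₁ vs₂ : List V}
    (h : PathVia E φ x z w (vs₁ ++ v :: vs₂)) :
    ∃ w₁ w₂, w = w₁ ++ w₂ ∧ PathVia E φ x v w₁ (vs₁ ++ [v]) ∧ PathVia E φ v z w₂ (v :: vs₂) := by
  induction vs₁ generalizing x w with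
  | nil =>
    obtain rfl := h.head_eq
    exact ⟨[], w, rfl, .nil x, h⟩
  | cons a vs₁ ih =>
    generalize hvs : a :: vs₁ ++ v :: vs₂ = vs at h
    cases h with
    | nil => simp at hvs
    | cons he h =>
      obtain ⟨rfl, rfl⟩ := List.cons_eq_cons.mp hvs
      obtain ⟨w₁, w₂, rfl, h₁, h₂⟩ := ih h
      exact ⟨_, w₂, rfl, .cons he h₁, h₂⟩

theorem exists_cut_cycle {x z v : V} {w : List A} {vs₁ vs₂ vs₃ : List V}
    (h : PathVia E φ x z w (vs₁ ++ v :: vs₂ ++ v :: vs₃)) :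
    ∃ w₁ c w₂, w = w₁ ++ c ++ w₂ ∧ PathVia E φ x z (w₁ ++ w₂) (vs₁ ++ v :: vs₃) := by
  obtain ⟨w₁, w', rfl, h₁, h'⟩ := split (vs₂ := vs₂ ++ v :: vs₃) (by simpa using h)
  obtain ⟨c, w₂, rfl, -, h₂⟩ := split (vs₁ := v :: vs₂) h'
  exact ⟨w₁, c, w₂, by simp, by simpa using h₁.append h₂⟩

theorem exists_nodup_of_cycle_closed (P : List A → Prop)
    (hP : ∀ w₁ c w₂, P (w₁ ++ c ++ w₂) → P (w₁ ++ w₂)) {x z : V} {w : List A} {vs : List V}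
    (h : PathVia E φ x z w vs) (hw : P w) :
    ∃ w' vs', PathVia E φ x z w' vs' ∧ vs'.Nodup ∧ P w' := by
  induction hn : vs.length using Nat.strong_induction_on generalizing w vs with
  | _ n ih =>
    by_cases hnd : vs.Nodup
    · exact ⟨w, vs, h, hnd, hw⟩
    obtain ⟨v, hv⟩ := List.exists_duplicate_iff_not_nodup.mpr hnd
    obtain ⟨vs₁, vs₂, vs₃, rfl⟩ := hv.exists_eq_append_cons_append_cons
    obtain ⟨w₁, c, w₂, rfl, h'⟩ := h.exists_cut_cycle
    exact ih _ (by simp [← hn]) h' (hP w₁ c w₂ hw) rfl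

end PathVia

theorem containment_implies_simple_path_general {V S A : Type*}
    (E : V → V → Prop) (φ : V → V → A) (δ : S → A → S) (s₀ : S) (F : Set S)
    (hcont : ContainmentProperty δ s₀ F) (x u : V)
    (h : ∃ (w : List A) (vs : List V), PathVia E φ x u w vs ∧ dstar δ s₀ w ∈ F) :
    ∃ (w : List A) (vs : List V),
      PathVia E φ x u w vs ∧ vs.Nodup ∧ dstar δ s₀ w ∈ F := by
  obtain ⟨w, vs, hp, hw⟩ := h
  exact hp.exists_nodup_of_cycle_closed (fun w ↦ dstar δ s₀ w ∈ F)
    (fun _ _ _ ↦ hcont.mem_of_append_append_mem) hw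

/-- If the DFA has the suffix language containment property and some path from
`x` to `u` in the finite graph `G` has label in `L(A)`, then there is a simple
path (no repeated vertices) from `x` to `u` whose label is in `L(A)`. -/
theorem containment_implies_simple_path {V S A : Type*} [Finite V]
    (E : V → V → Prop) (φ : V → V → A) (δ : S → A → S) (s₀ : S) (F : Set S)
    (hcont : ContainmentProperty δ s₀ F) (x u : V)
    (h : ∃ (w : List A) (vs : List V), PathVia E φ x u w vs ∧ dstar δ s₀ w ∈ F) :
    ∃ (w : List A) (vs : List V),
      PathVia E φ x u w vs ∧ vs.Nodup ∧ dstar δ s₀ w ∈ F :=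
  containment_implies_simple_path_general E φ δ s₀ F hcont x u h
end

section
/- Invariant 1 of the Δ tree index: if the spanning tree T_x contains node (u,s) at time τ with timestamp ts, then there exists a path p in the snapshot graph G_{W,τ} from x to u such that δ*(s₀, φ(p)) = s and τ − |W| < p.ts = ts ≤ τ. -/
/-- A timestamped edge of a streaming graph. -/
structure TEdge (V A : Type*) where
  src : V
  dst : V
  lbl : A
  ts : ℤ

/-- `EPath E u v p`: `p` is a (nonempty) path from `u` to `v` using edges of `E`. -/
inductive EPath {V A : Type*} (E : Set (TEdge V A)) : V → V → List (TEdge V A) → Prop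
  | single {e : TEdge V A} : e ∈ E → EPath E e.src e.dst [e]
  | cons {e : TEdge V A} {z : V} {l : List (TEdge V A)} :
      e ∈ E → EPath E e.dst z l → EPath E e.src z (e :: l)

/-- The minimum timestamp of a path (0 for the empty list). -/
def minTs {V A : Type*} : List (TEdge V A) → ℤ
  | [] => 0
  | e :: r => (r.map TEdge.ts).foldl min e.ts

/-- The snapshot graph `G_{W,τ}`: edges with timestamp in `(τ − W, τ]`. -/
def snapshot {V A : Type*} (E : Set (TEdge V A)) (W τ : ℤ) : Set (TEdge V A) :=
  { e ∈ E | τ - W < e.ts ∧ e.ts ≤ τ }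

/-- `TreeNode E W τ δ s₀ x u s ts`: node `(u, s)` belongs to the spanning tree
`T_x` of the Δ index with timestamp `ts`, built from window edges via the
parent-pointer structure: each node is reached from the root `(x, s₀)` through
edges of the snapshot, and its timestamp is the minimum edge timestamp on its
tree path. -/
inductive TreeNode {V S A : Type*} (E : Set (TEdge V A)) (W τ : ℤ)
    (δ : S → A → S) (s₀ : S) (x : V) : V → S → ℤ → Prop
  | base {e : TEdge V A} :
      e ∈ snapshot E W τ → e.src = x →
      TreeNode E W τ δ s₀ x e.dst (δ s₀ e.lbl) e.ts
  | step {u : V} {s : S} {ts : ℤ} {e : TEdge V A} :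
      TreeNode E W τ δ s₀ x u s ts → e ∈ snapshot E W τ → e.src = u →
      TreeNode E W τ δ s₀ x e.dst (δ s e.lbl) (min ts e.ts)

namespace EPath

variable {V A : Type*} {E : Set (TEdge V A)} {x u : V} {p : List (TEdge V A)}

lemma concat {e : TEdge V A} (h : EPath E x u p) (he : e ∈ E) (hu : e.src = u) :
    EPath E x e.dst (p ++ [e]) := by
  induction h with
  | single h' => exact cons h' (hu ▸ single he)
  | cons h' _ ih => exact cons h' (ih hu)

lemma ne_nil (h : EPath E x u p) : p ≠ [] := by
  cases h <;> simp

end EPath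

lemma dstar_concat {S A : Type*} (δ : S → A → S) (s : S) (w : List A) (a : A) :
    dstar δ s (w ++ [a]) = δ (dstar δ s w) a :=
  List.foldl_concat ..

lemma minTs_concat {V A : Type*} {p : List (TEdge V A)} (hp : p ≠ []) (e : TEdge V A) :
    minTs (p ++ [e]) = min (minTs p) e.ts := by
  obtain ⟨f, r, rfl⟩ := List.exists_cons_of_ne_nil hp
  simp [minTs, List.foldl_append]

namespace TreeNode

variable {V S A : Type*} {E : Set (TEdge V A)} {W τ : ℤ} {δ : S → A → S} {s₀ : S} {x u : V}
  {s : S} {ts : ℤ}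

lemma ts_mem_window (h : TreeNode E W τ δ s₀ x u s ts) : τ - W < ts ∧ ts ≤ τ := by
  induction h with
  | base he => exact he.2
  | step _ he _ ih => exact ⟨lt_min ih.1 he.2.1, (min_le_left _ _).trans ih.2⟩

lemma exists_path (h : TreeNode E W τ δ s₀ x u s ts) :
    ∃ p : List (TEdge V A), EPath (snapshot E W τ) x u p ∧
      dstar δ s₀ (p.map TEdge.lbl) = s ∧ minTs p = ts := by
  induction h with
  | @base e he hx =>
    subst hx
    exact ⟨[e], .single he, rfl, rfl⟩
  | @step _ _ _ e _ he hu ih =>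
    obtain ⟨p, hp, hstate, hts⟩ := ih
    refine ⟨p ++ [e], hp.concat he hu, ?_, ?_⟩
    · rw [List.map_append, List.map_singleton, dstar_concat, hstate]
    · rw [minTs_concat hp.ne_nil, hts]

end TreeNode

/-- Invariant 1 of the Δ tree index: if `T_x` contains node `(u, s)` at time
`τ` with timestamp `ts`, then there exists a path `p` in the snapshot graph
`G_{W,τ}` from `x` to `u` with `δ*(s₀, φ(p)) = s` and
`τ − W < p.ts = ts ≤ τ`. -/
theorem treeNode_invariant1 {V S A : Type*} (E : Set (TEdge V A)) (W τ : ℤ)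
    (δ : S → A → S) (s₀ : S) (x u : V) (s : S) (ts : ℤ)
    (h : TreeNode E W τ δ s₀ x u s ts) :
    ∃ p : List (TEdge V A), EPath (snapshot E W τ) x u p ∧
      dstar δ s₀ (p.map TEdge.lbl) = s ∧
      minTs p = ts ∧ τ - W < ts ∧ ts ≤ τ := by
  obtain ⟨p, hp, hstate, hts⟩ := h.exists_path
  exact ⟨p, hp, hstate, hts, h.ts_mem_window⟩
end
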